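/- For a single crowdsourcing user with non-overlapping requests separated by at least the maximum transfer time (e_i + q_max ≤ s_{i+1}), and a uniform moving cost p(·, d_i) = w_i to requester i's region, the maximum achievable system utility within budget C equals max { Σ_{i∈S} (e_i − s_i) : S ⊆ {1,…,M}, Σ_{i∈S} w_i ≤ C }. -/

import Mathlib

/-!
A feasible schedule can serve requester `i` only after entering the region `d i` along some step
of its route. The start lies outside every region and the regions are distinct, so distinct
served requesters have distinct entering steps, each costing exactly `w i`; hence the served set
`S` satisfies `∑ i ∈ S, w i ≤ cost ≤ C`, while requester `i` is served for at most `e i - s i`.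
Conversely, for any `S` within budget, visiting the regions of `S` in index order and staying
through each window is feasible, since consecutive windows are at least `qmax` apart, and it
serves for `∑ i ∈ S, (e i - s i)`. So each set of values dominates the other and the suprema agree.
-/

open MeasureTheory

/-- A schedule of a single crowdsourcing user: a sequence of `n+1` visited regions with
arrival/departure times, together with the set of times at which each requester is served. -/
structure Sched (K : Type) (M : ℕ) where
  n : ℕ
  reg : Fin (n + 1) → K
  arr : Fin (n + 1) → ℝ
  dep : Fin (n + 1) → ℝ
  serve : Fin M → Set ℝ

/-- Total moving cost of a schedule. -/
def Sched.cost {K : Type} {M : ℕ} (p : K → K → ℝ) (Γ : Sched K M) : ℝ :=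
  ∑ k : Fin Γ.n, p (Γ.reg k.castSucc) (Γ.reg k.succ)

/-- System utility of a schedule: total service time over all requesters. -/
noncomputable def Sched.util {K : Type} {M : ℕ} (Γ : Sched K M) : ℝ :=
  ∑ i : Fin M, (volume (Γ.serve i)).toReal

/-- Feasibility of a schedule: it starts at `start` at time 0, stays in each region between
arrival and departure, respects transfer times, its moving cost is within the budget `C`,
each requester `i` is only served inside its window `[s i, e i]` while the user is located in
`i`'s region `d i` (hence never during a transfer), and the single user serves at most one
requester at each time. -/
def Feasible {K : Type} {M : ℕ} (p q : K → K → ℝ) (C : ℝ) (start : K) (d : Fin M → K)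
    (s e : Fin M → ℝ) (Γ : Sched K M) : Prop :=
  Γ.reg 0 = start ∧ Γ.arr 0 = 0 ∧
  (∀ k, Γ.arr k ≤ Γ.dep k) ∧
  (∀ k : Fin Γ.n, Γ.dep k.castSucc + q (Γ.reg k.castSucc) (Γ.reg k.succ) ≤ Γ.arr k.succ) ∧
  Γ.cost p ≤ C ∧
  (∀ i, MeasurableSet (Γ.serve i)) ∧
  (∀ i, Γ.serve i ⊆ Set.Icc (s i) (e i)) ∧
  (∀ i, ∀ t ∈ Γ.serve i, ∃ k, Γ.reg k = d i ∧ t ∈ Set.Icc (Γ.arr k) (Γ.dep k)) ∧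
  (∀ i i', i ≠ i' → Disjoint (Γ.serve i) (Γ.serve i'))

lemma Fin.castSucc_eq_zero_or_exists_lt_succ {m : ℕ} (k : Fin m) :
    k.castSucc = 0 ∨ ∃ k' < k, k.castSucc = k'.succ := by
  rcases k with ⟨_ | v, hv⟩
  · exact Or.inl rfl
  · exact Or.inr ⟨⟨v, by omega⟩, Fin.mk_lt_mk.2 v.lt_succ_self, rfl⟩

lemma Fin.exists_castSucc_ne_and_succ_eq {α : Type*} {n : ℕ} {f : Fin (n + 1) → α} {a : α}
    (h0 : f 0 ≠ a) (ha : ∃ j, f j = a) : ∃ k : Fin n, f k.castSucc ≠ a ∧ f k.succ = a := by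
  by_contra! h
  obtain ⟨j, hj⟩ := ha
  exact Fin.induction (motive := fun j => f j ≠ a) h0 h j hj

lemma add_le_of_lt_of_forall_succ {M : ℕ} {s e : Fin M → ℝ} {δ : ℝ} (hδ : 0 ≤ δ)
    (hse : ∀ i, s i ≤ e i) (hsep : ∀ i j : Fin M, (i : ℕ) + 1 = j → e i + δ ≤ s j)
    {i j : Fin M} (hij : i < j) : e i + δ ≤ s j := by
  obtain ⟨j, hj⟩ := j
  induction j with
  | zero => exact absurd (Fin.lt_def.1 hij) (Nat.not_lt_zero _)
  | succ j ih =>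
    have hstep := hsep ⟨j, by omega⟩ ⟨j + 1, hj⟩ rfl
    obtain hlt | heq : (i : ℕ) < j ∨ (i : ℕ) = j := by
      rw [Fin.lt_def] at hij; simp only at hij; omega
    · linarith [ih (by omega) hlt, hse ⟨j, by omega⟩]
    · rwa [show i = ⟨j, by omega⟩ from Fin.ext heq]

section KnapsackSchedule

variable {K : Type} {M : ℕ} (start : K) (d : Fin M → K) (s e : Fin M → ℝ) (S : Finset (Fin M))

/-- The served sets are half-open so that windows meeting at a point (possible when `qmax = 0`)
stay disjoint. -/
noncomputable def knapsackSched : Sched K M where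
  n := S.card
  reg := Fin.cons start (d ∘ S.orderEmbOfFin rfl)
  arr := Fin.cons 0 (s ∘ S.orderEmbOfFin rfl)
  dep := Fin.cons 0 (e ∘ S.orderEmbOfFin rfl)
  serve i := if i ∈ S then Set.Ioc (s i) (e i) else ∅

lemma knapsackSched_castSucc (k : Fin (knapsackSched start d s e S).n) :
    ((knapsackSched start d s e S).reg k.castSucc = start ∧
      (knapsackSched start d s e S).dep k.castSucc = 0) ∨
    ∃ k' < k, (knapsackSched start d s e S).reg k.castSucc = d (S.orderEmbOfFin rfl k') ∧
      (knapsackSched start d s e S).dep k.castSucc = e (S.orderEmbOfFin rfl k') := by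
  rcases Fin.castSucc_eq_zero_or_exists_lt_succ k with h | ⟨k', hk', h⟩
  · exact Or.inl ⟨by rw [h]; rfl, by rw [h]; rfl⟩
  · exact Or.inr ⟨k', hk', by rw [h]; rfl, by rw [h]; rfl⟩

lemma knapsackSched_cost (hd : Function.Injective d) (hstart : start ∉ Set.range d)
    (p : K → K → ℝ) (w : Fin M → ℝ) (hpw : ∀ (k : K) (i : Fin M), k ≠ d i → p k (d i) = w i) :
    (knapsackSched start d s e S).cost p = ∑ i ∈ S, w i := by
  set f := S.orderEmbOfFin rfl
  have hstep (k : Fin (knapsackSched start d s e S).n) :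
      p ((knapsackSched start d s e S).reg k.castSucc)
        ((knapsackSched start d s e S).reg k.succ) = w (f k) := by
    change p _ (d (f k)) = w (f k)
    refine hpw _ _ fun hk => ?_
    rcases knapsackSched_castSucc start d s e S k with ⟨hreg, -⟩ | ⟨k', hk', hreg, -⟩
    · exact hstart ⟨f k, (hreg ▸ hk).symm⟩
    · exact (f.strictMono hk').ne (hd (hreg ▸ hk))
  calc (knapsackSched start d s e S).cost p = ∑ k, w (f k) := Fintype.sum_congr _ _ hstep
    _ = ∑ i ∈ S, w i := by
      conv_rhs => rw [← S.map_orderEmbOfFin_univ rfl, Finset.sum_map]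
      rfl

lemma knapsackSched_util (hse : ∀ i, s i ≤ e i) :
    (knapsackSched start d s e S).util = ∑ i ∈ S, (e i - s i) := by
  rw [Sched.util, ← Finset.sum_subset S.subset_univ fun i _ hi => by simp [knapsackSched, hi]]
  refine Finset.sum_congr rfl fun i hi => ?_
  simp [knapsackSched, hi, Real.volume_Ioc, sub_nonneg.2 (hse i)]

lemma knapsackSched_feasible (hd : Function.Injective d) (hstart : start ∉ Set.range d)
    (hse : ∀ i, s i ≤ e i) {qmax : ℝ} (hqmax : 0 ≤ qmax) (q : K → K → ℝ)
    (hqle : ∀ k₁ k₂, q k₁ k₂ ≤ qmax) (hsep : ∀ {i j : Fin M}, i < j → e i + qmax ≤ s j)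
    (hfirst : ∀ i, qmax ≤ s i) (p : K → K → ℝ) (w : Fin M → ℝ)
    (hpw : ∀ (k : K) (i : Fin M), k ≠ d i → p k (d i) = w i) {C : ℝ} (hS : ∑ i ∈ S, w i ≤ C) :
    Feasible p q C start d s e (knapsackSched start d s e S) := by
  set f := S.orderEmbOfFin rfl
  refine ⟨rfl, rfl, ?_, ?_, ?_, ?_, ?_, ?_, ?_⟩
  · exact Fin.cases le_rfl fun k => hse (f k)
  · intro k
    change _ + q _ (d (f k)) ≤ s (f k)
    rcases knapsackSched_castSucc start d s e S k with ⟨hreg, hdep⟩ | ⟨k', hk', hreg, hdep⟩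
    · rw [hreg, hdep]
      linarith [hqle start (d (f k)), hfirst (f k)]
    · rw [hreg, hdep]
      linarith [hqle (d (f k')) (d (f k)), hsep (f.strictMono hk')]
  · exact (knapsackSched_cost start d s e S hd hstart p w hpw).trans_le hS
  · intro i
    by_cases hi : i ∈ S <;> simp [knapsackSched, hi, measurableSet_Ioc]
  · intro i
    by_cases hi : i ∈ S <;> simp [knapsackSched, hi, Set.Ioc_subset_Icc_self]
  · intro i t ht
    by_cases hi : i ∈ S
    · obtain ⟨k, rfl⟩ : i ∈ Set.range f := by rwa [S.range_orderEmbOfFin]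
      simp only [knapsackSched, hi, if_true] at ht
      exact ⟨k.succ, rfl, Set.Ioc_subset_Icc_self ht⟩
    · simp [knapsackSched, hi] at ht
  · intro i j hij
    by_cases hi : i ∈ S <;> by_cases hj : j ∈ S <;> simp only [knapsackSched, hi, hj, if_true,
      if_false, Set.disjoint_empty, Set.empty_disjoint]
    rcases hij.lt_or_gt with h | h
    · exact Set.disjoint_left.2 fun t ht ht' => by linarith [ht.2, ht'.1, hsep h]
    · exact Set.disjoint_left.2 fun t ht ht' => by linarith [ht.1, ht'.2, hsep h]

end KnapsackSchedule

section Domination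

variable {K : Type} {M : ℕ} {d : Fin M → K} {s e : Fin M → ℝ} {p : K → K → ℝ} {w : Fin M → ℝ}

lemma Sched.sum_le_cost_of_visits (hd : Function.Injective d) (hpnn : ∀ k₁ k₂, 0 ≤ p k₁ k₂)
    (hpw : ∀ (k : K) (i : Fin M), k ≠ d i → p k (d i) = w i) (Γ : Sched K M)
    (h0 : Γ.reg 0 ∉ Set.range d) (T : Finset (Fin M)) (hT : ∀ i ∈ T, ∃ k, Γ.reg k = d i) :
    ∑ i ∈ T, w i ≤ Γ.cost p := by
  have hentry (i : T) : ∃ k : Fin Γ.n, Γ.reg k.castSucc ≠ d i ∧ Γ.reg k.succ = d i :=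
    Fin.exists_castSucc_ne_and_succ_eq (fun h => h0 ⟨i, h.symm⟩) (hT i i.2)
  choose ι hι using hentry
  have hι_inj : Function.Injective ι := fun i j hij =>
    Subtype.ext (hd ((hι i).2.symm.trans (hij ▸ (hι j).2)))
  calc ∑ i ∈ T, w i = ∑ i : T, p (Γ.reg (ι i).castSucc) (Γ.reg (ι i).succ) := by
        rw [← Finset.sum_coe_sort]
        refine Fintype.sum_congr _ _ fun i => ?_
        rw [(hι i).2, hpw _ _ (hι i).1]
    _ = ∑ k ∈ Finset.univ.map ⟨ι, hι_inj⟩, p (Γ.reg k.castSucc) (Γ.reg k.succ) := by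
        rw [Finset.sum_map]; rfl
    _ ≤ Γ.cost p := Finset.sum_le_univ_sum_of_nonneg fun _ => hpnn _ _

lemma Sched.util_le_sum_of_serve_subset (hse : ∀ i, s i ≤ e i) (Γ : Sched K M)
    (hsub : ∀ i, Γ.serve i ⊆ Set.Icc (s i) (e i)) (T : Finset (Fin M))
    (hT : ∀ i ∉ T, Γ.serve i = ∅) : Γ.util ≤ ∑ i ∈ T, (e i - s i) := by
  rw [Sched.util, ← Finset.sum_subset T.subset_univ fun i _ hi => by simp [hT i hi]]
  gcongr with i
  calc (volume (Γ.serve i)).toReal = volume.real (Γ.serve i) := rfl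
    _ ≤ volume.real (Set.Icc (s i) (e i)) := measureReal_mono (hsub i) measure_Icc_lt_top.ne
    _ = e i - s i := Real.volume_real_Icc_of_le (hse i)

lemma Feasible.exists_knapsack_ge {start : K} (hstart : start ∉ Set.range d)
    (hd : Function.Injective d) (hse : ∀ i, s i ≤ e i) (hpnn : ∀ k₁ k₂, 0 ≤ p k₁ k₂)
    (hpw : ∀ (k : K) (i : Fin M), k ≠ d i → p k (d i) = w i) {q : K → K → ℝ} {C : ℝ}
    {Γ : Sched K M} (hΓ : Feasible p q C start d s e Γ) :
    ∃ S : Finset (Fin M), ∑ i ∈ S, w i ≤ C ∧ Γ.util ≤ ∑ i ∈ S, (e i - s i) := by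
  classical
  obtain ⟨h0, -, -, -, hcost, -, hsub, hloc, -⟩ := hΓ
  refine ⟨({i | (Γ.serve i).Nonempty} : Finset _), ?_,
    Γ.util_le_sum_of_serve_subset hse hsub _ fun i hi => ?_⟩
  · refine (Γ.sum_le_cost_of_visits hd hpnn hpw (h0 ▸ hstart) _ fun i hi => ?_).trans hcost
    obtain ⟨t, ht⟩ := (Finset.mem_filter.1 hi).2
    obtain ⟨k, hk, -⟩ := hloc i t ht
    exact ⟨k, hk⟩
  · simpa [Set.not_nonempty_iff_eq_empty] using hi

end Domination

theorem stmt_5_general (K : Type) (M : ℕ) (d : Fin M → K) (hd : Function.Injective d)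
    (start : K) (hstart : start ∉ Set.range d)
    (s e : Fin M → ℝ) (hse : ∀ i, s i ≤ e i)
    (w : Fin M → ℝ)
    (qmax : ℝ) (hqmax : 0 ≤ qmax)
    (q : K → K → ℝ)
    (hqle : ∀ k₁ k₂, q k₁ k₂ ≤ qmax)
    (p : K → K → ℝ) (hpnn : ∀ k₁ k₂, 0 ≤ p k₁ k₂)
    (hpw : ∀ (k : K) (i : Fin M), k ≠ d i → p k (d i) = w i)
    (hsep : ∀ i j : Fin M, (i : ℕ) + 1 = (j : ℕ) → e i + qmax ≤ s j)
    (hfirst : ∀ i, qmax ≤ s i)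
    (C : ℝ) :
    sSup {u : ℝ | ∃ Γ : Sched K M, Feasible p q C start d s e Γ ∧ u = Γ.util}
      = sSup {u : ℝ | ∃ S : Finset (Fin M), (∑ i ∈ S, w i) ≤ C ∧ u = ∑ i ∈ S, (e i - s i)} := by
  apply csSup_eq_csSup_of_forall_exists_le
  · rintro _ ⟨Γ, hΓ, rfl⟩
    obtain ⟨S, hSC, hle⟩ := hΓ.exists_knapsack_ge hstart hd hse hpnn hpw
    exact ⟨_, ⟨S, hSC, rfl⟩, hle⟩
  · rintro _ ⟨S, hSC, rfl⟩
    refine ⟨_, ⟨knapsackSched start d s e S, ?_, rfl⟩, (knapsackSched_util start d s e S hse).ge⟩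
    exact knapsackSched_feasible start d s e S hd hstart hse hqmax q hqle
      (add_le_of_lt_of_forall_succ hqmax hse hsep) hfirst p w hpw hSC

/-- Correctness of the Knapsack reduction for a single crowdsourcing user: with requests
separated by at least the maximum transfer time and a uniform moving cost `w i` to requester
`i`'s region, the maximum achievable system utility within budget `C` equals
`max { Σ_{i∈S} (e i − s i) : S ⊆ {1,…,M}, Σ_{i∈S} w i ≤ C }`. -/
theorem stmt_5 (K : Type) (M : ℕ) (d : Fin M → K) (hd : Function.Injective d)
    (start : K) (hstart : start ∉ Set.range d)
    (s e : Fin M → ℝ) (hse : ∀ i, s i ≤ e i)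
    (w : Fin M → ℝ) (hw : ∀ i, 0 ≤ w i)
    (qmax : ℝ) (hqmax : 0 ≤ qmax)
    (q : K → K → ℝ) (hq0 : ∀ k, q k k = 0)
    (hqnn : ∀ k₁ k₂, 0 ≤ q k₁ k₂) (hqle : ∀ k₁ k₂, q k₁ k₂ ≤ qmax)
    (hqtri : ∀ k₁ k₂ k₃, q k₁ k₂ ≤ q k₁ k₃ + q k₃ k₂)
    (p : K → K → ℝ) (hp0 : ∀ k, p k k = 0) (hpnn : ∀ k₁ k₂, 0 ≤ p k₁ k₂)
    (hptri : ∀ k₁ k₂ k₃, p k₁ k₂ ≤ p k₁ k₃ + p k₃ k₂)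
    (hpw : ∀ (k : K) (i : Fin M), k ≠ d i → p k (d i) = w i)
    (hsep : ∀ i j : Fin M, (i : ℕ) + 1 = (j : ℕ) → e i + qmax ≤ s j)
    (hfirst : ∀ i, qmax ≤ s i)
    (C : ℝ) (hC : 0 ≤ C) :
    sSup {u : ℝ | ∃ Γ : Sched K M, Feasible p q C start d s e Γ ∧ u = Γ.util}
      = sSup {u : ℝ | ∃ S : Finset (Fin M), (∑ i ∈ S, w i) ≤ C ∧ u = ∑ i ∈ S, (e i - s i)} :=
  stmt_5_general K M d hd start hstart s e hse w qmax hqmax q hqle p hpnn hpw hsep hfirst C
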